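/- If P is a g-weakly 2-absorbing ideal of a G-graded ring R that is not a g-2-absorbing ideal, then P_g³ = {0}. -/
import Mathlib


variable {G R : Type*} [AddGroup G] [DecidableEq G] [Ring R]

/-- A two-sided ideal is graded if it contains all homogeneous components of its elements. -/
def IsGradedIdeal (𝒜 : G → AddSubgroup R) [GradedRing 𝒜] (P : TwoSidedIdeal R) : Prop :=
  ∀ a ∈ P, ∀ g : G, (DirectSum.decompose 𝒜 a g : R) ∈ P

/-- `P` is a `g`-2-absorbing ideal: `P` is a graded ideal with `P_g ≠ R_g`, and for
`x, y, z ∈ R_g`, `x R_e y R_e z ⊆ P` implies `xy ∈ P` or `yz ∈ P` or `xz ∈ P`. -/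
def IsG2Absorbing (𝒜 : G → AddSubgroup R) [GradedRing 𝒜] (g : G) (P : TwoSidedIdeal R) : Prop :=
  IsGradedIdeal 𝒜 P ∧ (∃ x ∈ 𝒜 g, x ∉ P) ∧
    ∀ x y z : R, x ∈ 𝒜 g → y ∈ 𝒜 g → z ∈ 𝒜 g →
      (∀ r s : R, r ∈ 𝒜 0 → s ∈ 𝒜 0 → x * r * y * s * z ∈ P) →
      x * y ∈ P ∨ y * z ∈ P ∨ x * z ∈ P

/-- `P` is a `g`-weakly 2-absorbing ideal: `P` is a graded ideal with `P_g ≠ R_g`, and for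
`x, y, z ∈ R_g`, `0 ≠ x R_e y R_e z ⊆ P` implies `xy ∈ P` or `yz ∈ P` or `xz ∈ P`. -/
def IsGWeakly2Absorbing (𝒜 : G → AddSubgroup R) [GradedRing 𝒜] (g : G)
    (P : TwoSidedIdeal R) : Prop :=
  IsGradedIdeal 𝒜 P ∧ (∃ x ∈ 𝒜 g, x ∉ P) ∧
    ∀ x y z : R, x ∈ 𝒜 g → y ∈ 𝒜 g → z ∈ 𝒜 g →
      (∃ r s : R, r ∈ 𝒜 0 ∧ s ∈ 𝒜 0 ∧ x * r * y * s * z ≠ 0) →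
      (∀ r s : R, r ∈ 𝒜 0 → s ∈ 𝒜 0 → x * r * y * s * z ∈ P) →
      x * y ∈ P ∨ y * z ∈ P ∨ x * z ∈ P

/-- `(x, y, z)` is a `g`-triple-zero of `P`: `x, y, z ∈ R_g`, `x R_e y R_e z = 0`,
`xy ∉ P`, `yz ∉ P` and `xz ∉ P`. -/
def IsGTripleZero (𝒜 : G → AddSubgroup R) (g : G) (P : TwoSidedIdeal R) (x y z : R) : Prop :=
  x ∈ 𝒜 g ∧ y ∈ 𝒜 g ∧ z ∈ 𝒜 g ∧
    (∀ r s : R, r ∈ 𝒜 0 → s ∈ 𝒜 0 → x * r * y * s * z = 0) ∧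
    x * y ∉ P ∧ y * z ∉ P ∧ x * z ∉ P

/-- Corollary 4.18: if `P` is a `g`-weakly 2-absorbing ideal that is not `g`-2-absorbing,
then `P_g³ = {0}`. -/
theorem stmt16 (𝒜 : G → AddSubgroup R) [GradedRing 𝒜] (g : G) (P : TwoSidedIdeal R)
    (hP : IsGWeakly2Absorbing 𝒜 g P) (hnot : ¬ IsG2Absorbing 𝒜 g P) :
    ∀ p ∈ P, p ∈ 𝒜 g → ∀ q ∈ P, q ∈ 𝒜 g → ∀ r ∈ P, r ∈ 𝒜 g → p * q * r = 0 := by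

  obtain ⟨hgr, hproper, habs⟩ := hP
  -- A counterexample to 2-absorbingness
  have hf : ¬ ∀ x y z : R, x ∈ 𝒜 g → y ∈ 𝒜 g → z ∈ 𝒜 g →
      (∀ r s : R, r ∈ 𝒜 0 → s ∈ 𝒜 0 → x * r * y * s * z ∈ P) →
      x * y ∈ P ∨ y * z ∈ P ∨ x * z ∈ P := fun f => hnot ⟨hgr, hproper, f⟩
  push_neg at hf
  obtain ⟨x, y, z, hx, hy, hz, hmem, hxy, hyz, hxz⟩ := hf
  -- (x, y, z) is a g-triple-zero
  have hzero : ∀ r s : R, r ∈ 𝒜 0 → s ∈ 𝒜 0 → x * r * y * s * z = 0 := by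
    intro r s hr hs
    by_contra hne
    rcases habs x y z hx hy hz ⟨r, s, hr, hs, hne⟩ hmem with h | h | h
    · exact hxy h
    · exact hyz h
    · exact hxz h
  have hsubP : ∀ a b : R, a + b ∈ P → b ∈ P → a ∈ P := by
    intro a b hab hb
    have := P.sub_mem hab hb
    simpa using this
  -- Step 1a : x R₀ y R₀ P_g = 0
  have h1a : ∀ p, p ∈ P → p ∈ 𝒜 g → ∀ r s : R, r ∈ 𝒜 0 → s ∈ 𝒜 0 →
      x * r * y * s * p = 0 := by
    intro p hp hpg r s hr hs
    by_contra hne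
    have key : ∀ r' s' : R, r' ∈ 𝒜 0 → s' ∈ 𝒜 0 → x * r' * y * s' * (z + p) = x * r' * y * s' * p := by
      intro r' s' hr' hs'
      rw [mul_add, hzero r' s' hr' hs', zero_add]
    rcases habs x y (z + p) hx hy ((𝒜 g).add_mem hz hpg)
        ⟨r, s, hr, hs, by rw [key r s hr hs]; exact hne⟩
        (fun r' s' hr' hs' => by rw [key r' s' hr' hs']; exact P.mul_mem_left _ _ hp)
        with h | h | h
    · exact hxy h
    · rw [mul_add] at h
      exact hyz (hsubP _ _ h (P.mul_mem_left _ _ hp))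
    · rw [mul_add] at h
      exact hxz (hsubP _ _ h (P.mul_mem_left _ _ hp))
  -- Step 1b : x R₀ P_g R₀ z = 0
  have h1b : ∀ p, p ∈ P → p ∈ 𝒜 g → ∀ r s : R, r ∈ 𝒜 0 → s ∈ 𝒜 0 →
      x * r * p * s * z = 0 := by
    intro p hp hpg r s hr hs
    by_contra hne
    have key : ∀ r' s' : R, r' ∈ 𝒜 0 → s' ∈ 𝒜 0 →
        x * r' * (y + p) * s' * z = x * r' * p * s' * z := by
      intro r' s' hr' hs'
      rw [mul_add, add_mul, add_mul, hzero r' s' hr' hs', zero_add]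
    rcases habs x (y + p) z hx ((𝒜 g).add_mem hy hpg) hz
        ⟨r, s, hr, hs, by rw [key r s hr hs]; exact hne⟩
        (fun r' s' hr' hs' => by
          rw [key r' s' hr' hs']
          exact P.mul_mem_right _ _ (P.mul_mem_right _ _ (P.mul_mem_left _ _ hp)))
        with h | h | h
    · rw [mul_add] at h
      exact hxy (hsubP _ _ h (P.mul_mem_left _ _ hp))
    · rw [add_mul] at h
      exact hyz (hsubP _ _ h (P.mul_mem_right _ _ hp))
    · exact hxz h
  -- Step 1c : P_g R₀ y R₀ z = 0
  have h1c : ∀ p, p ∈ P → p ∈ 𝒜 g → ∀ r s : R, r ∈ 𝒜 0 → s ∈ 𝒜 0 →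
      p * r * y * s * z = 0 := by
    intro p hp hpg r s hr hs
    by_contra hne
    have key : ∀ r' s' : R, r' ∈ 𝒜 0 → s' ∈ 𝒜 0 →
        (x + p) * r' * y * s' * z = p * r' * y * s' * z := by
      intro r' s' hr' hs'
      rw [add_mul, add_mul, add_mul, add_mul, hzero r' s' hr' hs', zero_add]
    rcases habs (x + p) y z ((𝒜 g).add_mem hx hpg) hy hz
        ⟨r, s, hr, hs, by rw [key r s hr hs]; exact hne⟩
        (fun r' s' hr' hs' => by
          rw [key r' s' hr' hs']
          exact P.mul_mem_right _ _ (P.mul_mem_right _ _ (P.mul_mem_right _ _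
            (P.mul_mem_right _ _ hp))))
        with h | h | h
    · rw [add_mul] at h
      exact hxy (hsubP _ _ h (P.mul_mem_right _ _ hp))
    · exact hyz h
    · rw [add_mul] at h
      exact hxz (hsubP _ _ h (P.mul_mem_right _ _ hp))
  -- Step 2a : x R₀ P_g R₀ P_g = 0
  have h2a : ∀ p, p ∈ P → p ∈ 𝒜 g → ∀ q, q ∈ P → q ∈ 𝒜 g →
      ∀ r s : R, r ∈ 𝒜 0 → s ∈ 𝒜 0 → x * r * p * s * q = 0 := by
    intro p hp hpg q hq hqg r s hr hs
    by_contra hne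
    have key : ∀ r' s' : R, r' ∈ 𝒜 0 → s' ∈ 𝒜 0 →
        x * r' * (y + p) * s' * (z + q) = x * r' * p * s' * q := by
      intro r' s' hr' hs'
      simp only [mul_add, add_mul, hzero r' s' hr' hs', h1a q hq hqg r' s' hr' hs',
        h1b p hp hpg r' s' hr' hs', zero_add, add_zero]
    rcases habs x (y + p) (z + q) hx ((𝒜 g).add_mem hy hpg) ((𝒜 g).add_mem hz hqg)
        ⟨r, s, hr, hs, by rw [key r s hr hs]; exact hne⟩
        (fun r' s' hr' hs' => by rw [key r' s' hr' hs']; exact P.mul_mem_left _ _ hq)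
        with h | h | h
    · rw [mul_add] at h
      exact hxy (hsubP _ _ h (P.mul_mem_left _ _ hp))
    · rw [add_mul, mul_add, mul_add, add_assoc] at h
      refine hyz (hsubP _ _ h (P.add_mem (P.mul_mem_left _ _ hq)
        (P.add_mem (P.mul_mem_right _ _ hp) (P.mul_mem_left _ _ hq))))
    · rw [mul_add] at h
      exact hxz (hsubP _ _ h (P.mul_mem_left _ _ hq))
  -- Step 2b : P_g R₀ y R₀ P_g = 0
  have h2b : ∀ p, p ∈ P → p ∈ 𝒜 g → ∀ q, q ∈ P → q ∈ 𝒜 g →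
      ∀ r s : R, r ∈ 𝒜 0 → s ∈ 𝒜 0 → p * r * y * s * q = 0 := by
    intro p hp hpg q hq hqg r s hr hs
    by_contra hne
    have key : ∀ r' s' : R, r' ∈ 𝒜 0 → s' ∈ 𝒜 0 →
        (x + p) * r' * y * s' * (z + q) = p * r' * y * s' * q := by
      intro r' s' hr' hs'
      simp only [mul_add, add_mul, hzero r' s' hr' hs', h1a q hq hqg r' s' hr' hs',
        h1c p hp hpg r' s' hr' hs', zero_add, add_zero]
    rcases habs (x + p) y (z + q) ((𝒜 g).add_mem hx hpg) hy ((𝒜 g).add_mem hz hqg)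
        ⟨r, s, hr, hs, by rw [key r s hr hs]; exact hne⟩
        (fun r' s' hr' hs' => by rw [key r' s' hr' hs']; exact P.mul_mem_left _ _ hq)
        with h | h | h
    · rw [add_mul] at h
      exact hxy (hsubP _ _ h (P.mul_mem_right _ _ hp))
    · rw [mul_add] at h
      exact hyz (hsubP _ _ h (P.mul_mem_left _ _ hq))
    · rw [add_mul, mul_add, mul_add, add_assoc] at h
      refine hxz (hsubP _ _ h (P.add_mem (P.mul_mem_left _ _ hq)
        (P.add_mem (P.mul_mem_right _ _ hp) (P.mul_mem_left _ _ hq))))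
  -- Step 2c : P_g R₀ P_g R₀ z = 0
  have h2c : ∀ p, p ∈ P → p ∈ 𝒜 g → ∀ q, q ∈ P → q ∈ 𝒜 g →
      ∀ r s : R, r ∈ 𝒜 0 → s ∈ 𝒜 0 → p * r * q * s * z = 0 := by
    intro p hp hpg q hq hqg r s hr hs
    by_contra hne
    have key : ∀ r' s' : R, r' ∈ 𝒜 0 → s' ∈ 𝒜 0 →
        (x + p) * r' * (y + q) * s' * z = p * r' * q * s' * z := by
      intro r' s' hr' hs'
      simp only [mul_add, add_mul, hzero r' s' hr' hs', h1b q hq hqg r' s' hr' hs',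
        h1c p hp hpg r' s' hr' hs', zero_add, add_zero]
    rcases habs (x + p) (y + q) z ((𝒜 g).add_mem hx hpg) ((𝒜 g).add_mem hy hqg) hz
        ⟨r, s, hr, hs, by rw [key r s hr hs]; exact hne⟩
        (fun r' s' hr' hs' => by
          rw [key r' s' hr' hs']
          exact P.mul_mem_right _ _ (P.mul_mem_right _ _ (P.mul_mem_left _ _ hq)))
        with h | h | h
    · rw [add_mul, mul_add, mul_add, add_assoc] at h
      refine hxy (hsubP _ _ h (P.add_mem (P.mul_mem_left _ _ hq)
        (P.add_mem (P.mul_mem_right _ _ hp) (P.mul_mem_left _ _ hq))))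
    · rw [add_mul] at h
      exact hyz (hsubP _ _ h (P.mul_mem_right _ _ hq))
    · rw [add_mul] at h
      exact hxz (hsubP _ _ h (P.mul_mem_right _ _ hp))
  -- Step 3 : P_g R₀ P_g R₀ P_g = 0
  have h3 : ∀ p, p ∈ P → p ∈ 𝒜 g → ∀ q, q ∈ P → q ∈ 𝒜 g → ∀ w, w ∈ P → w ∈ 𝒜 g →
      ∀ r s : R, r ∈ 𝒜 0 → s ∈ 𝒜 0 → p * r * q * s * w = 0 := by
    intro p hp hpg q hq hqg w hw hwg r s hr hs
    by_contra hne
    have key : ∀ r' s' : R, r' ∈ 𝒜 0 → s' ∈ 𝒜 0 →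
        (x + p) * r' * (y + q) * s' * (z + w) = p * r' * q * s' * w := by
      intro r' s' hr' hs'
      simp only [mul_add, add_mul, hzero r' s' hr' hs',
        h1a w hw hwg r' s' hr' hs', h1b q hq hqg r' s' hr' hs', h1c p hp hpg r' s' hr' hs',
        h2a q hq hqg w hw hwg r' s' hr' hs', h2b p hp hpg w hw hwg r' s' hr' hs',
        h2c p hp hpg q hq hqg r' s' hr' hs', zero_add, add_zero]
    rcases habs (x + p) (y + q) (z + w) ((𝒜 g).add_mem hx hpg) ((𝒜 g).add_mem hy hqg)
        ((𝒜 g).add_mem hz hwg)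
        ⟨r, s, hr, hs, by rw [key r s hr hs]; exact hne⟩
        (fun r' s' hr' hs' => by rw [key r' s' hr' hs']; exact P.mul_mem_left _ _ hw)
        with h | h | h
    · rw [add_mul, mul_add, mul_add, add_assoc] at h
      refine hxy (hsubP _ _ h (P.add_mem (P.mul_mem_left _ _ hq)
        (P.add_mem (P.mul_mem_right _ _ hp) (P.mul_mem_left _ _ hq))))
    · rw [add_mul, mul_add, mul_add, add_assoc] at h
      refine hyz (hsubP _ _ h (P.add_mem (P.mul_mem_left _ _ hw)
        (P.add_mem (P.mul_mem_right _ _ hq) (P.mul_mem_left _ _ hw))))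
    · rw [add_mul, mul_add, mul_add, add_assoc] at h
      refine hxz (hsubP _ _ h (P.add_mem (P.mul_mem_left _ _ hw)
        (P.add_mem (P.mul_mem_right _ _ hp) (P.mul_mem_left _ _ hw))))
  intro p hp hpg q hq hqg w hw hwg
  have := h3 p hp hpg q hq hqg w hw hwg 1 1 (SetLike.one_mem_graded 𝒜) (SetLike.one_mem_graded 𝒜)
  simpa using this
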